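/- Let d ∈ ℝⁿ with d ≠ 0, 0 < ε < 1, δ = ‖d‖√(1−ε²), and let p ∈ ℝⁿ with ‖p − d‖ < δ. Then p ≠ 0 and (d·p)/(‖d‖‖p‖) > ε; i.e., the open ball B(d, δ) is contained in the open angular cone U(ρ,ε) around the ray ρ spanned by d. -/
import Mathlib

/-- The standard inner product on ℝⁿ. -/
def dot {n : ℕ} (x y : Fin n → ℝ) : ℝ := ∑ i, x i * y i

/-- The Euclidean norm on ℝⁿ. -/
noncomputable def nrm {n : ℕ} (x : Fin n → ℝ) : ℝ := Real.sqrt (dot x x)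

lemma dot_self_nonneg {n : ℕ} (x : Fin n → ℝ) : 0 ≤ dot x x :=
  Finset.sum_nonneg fun i _ => mul_self_nonneg _

lemma nrm_nonneg {n : ℕ} (x : Fin n → ℝ) : 0 ≤ nrm x := Real.sqrt_nonneg _

lemma nrm_sq {n : ℕ} (x : Fin n → ℝ) : nrm x ^ 2 = dot x x := by
  rw [nrm, Real.sq_sqrt (dot_self_nonneg x)]

lemma dot_sub_sub {n : ℕ} (x y : Fin n → ℝ) :
    dot (x - y) (x - y) = dot x x - 2 * dot x y + dot y y := by
  simp only [dot, Pi.sub_apply, Finset.mul_sum, ← Finset.sum_add_distrib,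
    ← Finset.sum_sub_distrib]
  exact Finset.sum_congr rfl fun i _ => by ring

lemma dot_self_pos {n : ℕ} {x : Fin n → ℝ} (hx : x ≠ 0) : 0 < dot x x := by
  rcases Function.ne_iff.mp hx with ⟨i, hi⟩
  have : (0:ℝ) < x i * x i := mul_self_pos.mpr hi
  exact Finset.sum_pos' (fun j _ => mul_self_nonneg _) ⟨i, Finset.mem_univ i, this⟩

lemma nrm_pos {n : ℕ} {x : Fin n → ℝ} (hx : x ≠ 0) : 0 < nrm x :=
  Real.sqrt_pos.mpr (dot_self_pos hx)

/-- The open ball `B(d, δ)` with `δ = ‖d‖√(1-ε²)` is contained in the open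
angular cone `U(ρ,ε)` around the ray spanned by `d`. -/
theorem stmt18 {n : ℕ} (d : Fin n → ℝ) (hd : d ≠ 0)
    (ε : ℝ) (hε0 : 0 < ε) (hε1 : ε < 1)
    (p : Fin n → ℝ) (hp : nrm (p - d) < nrm d * Real.sqrt (1 - ε ^ 2)) :
    p ≠ 0 ∧ ε < dot d p / (nrm d * nrm p) := by
  have hD : 0 < nrm d := nrm_pos hd
  have hs0 : (0:ℝ) ≤ 1 - ε ^ 2 := by nlinarith
  have hs : Real.sqrt (1 - ε ^ 2) ^ 2 = 1 - ε ^ 2 := Real.sq_sqrt hs0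
  -- square the hypothesis
  have hE2 : nrm (p - d) ^ 2 < nrm d ^ 2 * (1 - ε ^ 2) := by
    have := pow_lt_pow_left₀ hp (nrm_nonneg _) two_ne_zero
    calc nrm (p - d) ^ 2 < (nrm d * Real.sqrt (1 - ε ^ 2)) ^ 2 := this
      _ = nrm d ^ 2 * (1 - ε ^ 2) := by rw [mul_pow, hs]
  have hpol : nrm (p - d) ^ 2 = nrm p ^ 2 - 2 * dot p d + nrm d ^ 2 := by
    rw [nrm_sq, nrm_sq, nrm_sq, dot_sub_sub]
  have hdp : dot d p = dot p d := by
    simp only [dot]; exact Finset.sum_congr rfl fun i _ => mul_comm _ _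
  have hp0 : p ≠ 0 := by
    rintro rfl
    have hnd : nrm (0 - (d : Fin n → ℝ)) = nrm d := by
      simp [nrm, dot]
    rw [hnd] at hp
    have h1 : Real.sqrt (1 - ε ^ 2) < 1 := by
      nlinarith [Real.sqrt_nonneg (1 - ε ^ 2), hs]
    nlinarith
  have hP : 0 < nrm p := nrm_pos hp0
  refine ⟨hp0, ?_⟩
  rw [lt_div_iff₀ (by positivity)]
  nlinarith [sq_nonneg (ε * nrm d - nrm p), hE2, hpol, hdp]
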